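/- arXiv:2312.16034 — 3 statements merged into one kernel-verified Lean document; each statement's English description precedes it below -/
import Mathlib

section
/- Let q = (q_1,...,q_m) be a vector of percentage capacities in (0,1)^m and v = (v_1,...,v_m) a non-decreasing vector in [0,1]^m with pairwise distinct entries, and π a permutation of [m]. If the system of inequalities q_{π(1)} ≥ v_2, q_{π(j)} ≥ v_{j+1} − v_{j−1} for j = 2,...,m−1, and q_{π(m)} ≥ 1 − v_{m−1} holds, then for every n ∈ ℕ and every sorted report vector x ∈ ℝ^n, placing a facility of capacity ⌊q_{π(j)}(n−1)⌋+1 at x_{⌊v_j(n−1)⌋+1} and assigning each agent to its closest facility never overloads any facility. -/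
open scoped Classical in
/-- if the feasibility system of inequalities holds, the Extended
Ranking Mechanism never overloads any facility: for every number `n` of agents and
every sorted report vector `x`, the number of agents strictly closer to the facility
placed at `x (⌊v j * (n-1)⌋ + 1)` than to any other facility is at most the capacity
`⌊q (π j) * (n-1)⌋ + 1`.  Indices `1,…,m` are used for facilities and `1,…,n` for agents. -/
theorem erm_feasible_of_system (m : ℕ) (hm : 2 ≤ m) (q v : ℕ → ℝ)
    (hq : ∀ j, 1 ≤ j → j ≤ m → 0 < q j ∧ q j < 1)
    (hv01 : ∀ j, 1 ≤ j → j ≤ m → 0 ≤ v j ∧ v j ≤ 1)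
    (hvmono : ∀ i j, 1 ≤ i → i ≤ j → j ≤ m → v i ≤ v j)
    (hvdist : ∀ i j, 1 ≤ i → i < j → j ≤ m → v i ≠ v j)
    (π : Equiv.Perm ℕ) (hπ : ∀ j, 1 ≤ j → j ≤ m → 1 ≤ π j ∧ π j ≤ m)
    (hsys : ∀ j, 1 ≤ j → j ≤ m →
      q (π j) ≥ (if j = m then 1 else v (j + 1)) - (if j = 1 then 0 else v (j - 1))) :
    ∀ n : ℕ, 1 ≤ n → ∀ x : ℕ → ℝ,
      (∀ i i', 1 ≤ i → i ≤ i' → i' ≤ n → x i ≤ x i') →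
      ∀ j, 1 ≤ j → j ≤ m →
        ((Finset.Icc 1 n).filter fun i =>
            ∀ l, 1 ≤ l → l ≤ m → l ≠ j →
              |x i - x ((⌊v j * ((n : ℝ) - 1)⌋).toNat + 1)| <
                |x i - x ((⌊v l * ((n : ℝ) - 1)⌋).toNat + 1)|).card
          ≤ (⌊q (π j) * ((n : ℝ) - 1)⌋).toNat + 1 := by
  intro n hn x hx j hj1 hjm
  have hN0 : (0:ℝ) ≤ (n : ℝ) - 1 := by
    have : (1:ℝ) ≤ (n:ℝ) := by exact_mod_cast hn
    linarith
  have hfl0 : ∀ l, 1 ≤ l → l ≤ m → (0:ℤ) ≤ ⌊v l * ((n:ℝ) - 1)⌋ := by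
    intro l h1 h2
    exact Int.floor_nonneg.2 (mul_nonneg (hv01 l h1 h2).1 hN0)
  have hflub : ∀ l, 1 ≤ l → l ≤ m → ⌊v l * ((n:ℝ) - 1)⌋ ≤ (n:ℤ) - 1 := by
    intro l h1 h2
    have h := (hv01 l h1 h2).2
    have h' : v l * ((n:ℝ) - 1) ≤ ((n:ℝ) - 1) := by nlinarith
    have h2' : ⌊v l * ((n:ℝ) - 1)⌋ ≤ ⌊((n:ℝ) - 1)⌋ := Int.floor_mono h'
    have h3' : ⌊((n:ℝ) - 1)⌋ = (n:ℤ) - 1 := by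
      rw [show ((n:ℝ) - 1) = (((n:ℤ) - 1 : ℤ) : ℝ) by push_cast; ring, Int.floor_intCast]
    omega
  have hPle : ∀ l, 1 ≤ l → l ≤ m → (⌊v l * ((n:ℝ) - 1)⌋).toNat + 1 ≤ n := by
    intro l h1 h2
    have := hflub l h1 h2
    omega
  have hPmono : ∀ a b, 1 ≤ a → a ≤ b → b ≤ m →
      (⌊v a * ((n:ℝ) - 1)⌋).toNat + 1 ≤ (⌊v b * ((n:ℝ) - 1)⌋).toNat + 1 := by
    intro a b h1 h2 h3
    have hv := hvmono a b h1 h2 h3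
    have : ⌊v a * ((n:ℝ) - 1)⌋ ≤ ⌊v b * ((n:ℝ) - 1)⌋ :=
      Int.floor_mono (by nlinarith)
    omega
  have key_lo : 2 ≤ j → ∀ i, 1 ≤ i → i ≤ n →
      |x i - x ((⌊v j * ((n:ℝ) - 1)⌋).toNat + 1)| <
        |x i - x ((⌊v (j-1) * ((n:ℝ) - 1)⌋).toNat + 1)| →
      (⌊v (j-1) * ((n:ℝ) - 1)⌋).toNat + 1 < i := by
    intro hj2 i hi1 hin h
    by_contra hle
    push_neg at hle
    have hab := hPmono (j-1) j (by omega) (by omega) hjm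
    have h1 : x i ≤ x ((⌊v (j-1) * ((n:ℝ) - 1)⌋).toNat + 1) :=
      hx _ _ hi1 hle (hPle (j-1) (by omega) (by omega))
    have h2 : x ((⌊v (j-1) * ((n:ℝ) - 1)⌋).toNat + 1) ≤ x ((⌊v j * ((n:ℝ) - 1)⌋).toNat + 1) :=
      hx _ _ (by omega) hab (hPle j hj1 hjm)
    rw [abs_of_nonpos (by linarith), abs_of_nonpos (by linarith)] at h
    linarith
  have key_hi : j < m → ∀ i, 1 ≤ i → i ≤ n →
      |x i - x ((⌊v j * ((n:ℝ) - 1)⌋).toNat + 1)| <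
        |x i - x ((⌊v (j+1) * ((n:ℝ) - 1)⌋).toNat + 1)| →
      i < (⌊v (j+1) * ((n:ℝ) - 1)⌋).toNat + 1 := by
    intro hjm' i hi1 hin h
    by_contra hle
    push_neg at hle
    have hab := hPmono j (j+1) hj1 (by omega) (by omega)
    have h1 : x ((⌊v (j+1) * ((n:ℝ) - 1)⌋).toNat + 1) ≤ x i :=
      hx _ _ (by omega) hle hin
    have h2 : x ((⌊v j * ((n:ℝ) - 1)⌋).toNat + 1) ≤ x ((⌊v (j+1) * ((n:ℝ) - 1)⌋).toNat + 1) :=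
      hx _ _ (by omega) hab (hPle (j+1) (by omega) (by omega))
    rw [abs_of_nonneg (by linarith), abs_of_nonneg (by linarith)] at h
    linarith
  have hq0 : (0:ℤ) ≤ ⌊q (π j) * ((n:ℝ) - 1)⌋ := by
    have hπj := hπ j hj1 hjm
    exact Int.floor_nonneg.2 (mul_nonneg (le_of_lt (hq (π j) hπj.1 hπj.2).1) hN0)
  have hsysj := hsys j hj1 hjm
  rcases eq_or_ne j 1 with hj1' | hjne1
  · -- j = 1, hence j < m
    have hjltm : j < m := by omega
    rw [if_neg (by omega : ¬ j = m), if_pos hj1', sub_zero] at hsysj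
    have hcard : ((Finset.Icc 1 n).filter fun i =>
            ∀ l, 1 ≤ l → l ≤ m → l ≠ j →
              |x i - x ((⌊v j * ((n : ℝ) - 1)⌋).toNat + 1)| <
                |x i - x ((⌊v l * ((n : ℝ) - 1)⌋).toNat + 1)|).card
          ≤ (Finset.Icc 1 ((⌊v (j+1) * ((n:ℝ) - 1)⌋).toNat)).card := by
      apply Finset.card_le_card
      intro i hi
      simp only [Finset.mem_filter, Finset.mem_Icc] at hi ⊢
      obtain ⟨⟨hi1, hin⟩, hcl⟩ := hi
      have h := hcl (j+1) (by omega) (by omega) (by omega)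
      have := key_hi hjltm i hi1 hin h
      omega
    rw [Nat.card_Icc] at hcard
    have hfl : ⌊v (j+1) * ((n:ℝ) - 1)⌋ ≤ ⌊q (π j) * ((n:ℝ) - 1)⌋ :=
      Int.floor_mono (by nlinarith)
    have := hfl0 (j+1) (by omega) (by omega)
    omega
  rcases eq_or_ne j m with hjm' | hjnem
  · -- j = m
    have hj2 : 2 ≤ j := by omega
    rw [if_pos hjm', if_neg hjne1] at hsysj
    have hcard : ((Finset.Icc 1 n).filter fun i =>
            ∀ l, 1 ≤ l → l ≤ m → l ≠ j →
              |x i - x ((⌊v j * ((n : ℝ) - 1)⌋).toNat + 1)| <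
                |x i - x ((⌊v l * ((n : ℝ) - 1)⌋).toNat + 1)|).card
          ≤ (Finset.Icc ((⌊v (j-1) * ((n:ℝ) - 1)⌋).toNat + 2) n).card := by
      apply Finset.card_le_card
      intro i hi
      simp only [Finset.mem_filter, Finset.mem_Icc] at hi ⊢
      obtain ⟨⟨hi1, hin⟩, hcl⟩ := hi
      have h := hcl (j-1) (by omega) (by omega) (by omega)
      have := key_lo hj2 i hi1 hin h
      omega
    rw [Nat.card_Icc] at hcard
    have hb0 := hfl0 (j-1) (by omega) (by omega)
    have hkey : (n:ℤ) - 2 - ⌊v (j-1) * ((n:ℝ) - 1)⌋ ≤ ⌊q (π j) * ((n:ℝ) - 1)⌋ := by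
      rw [Int.le_floor]
      have h1 : (1 - v (j-1)) * ((n:ℝ) - 1) ≤ q (π j) * ((n:ℝ) - 1) := by nlinarith
      have h2 : v (j-1) * ((n:ℝ) - 1) < (⌊v (j-1) * ((n:ℝ) - 1)⌋ : ℝ) + 1 :=
        Int.lt_floor_add_one _
      push_cast
      nlinarith
    omega
  · -- 2 ≤ j < m
    have hj2 : 2 ≤ j := by omega
    have hjltm : j < m := by omega
    rw [if_neg hjnem, if_neg hjne1] at hsysj
    have hcard : ((Finset.Icc 1 n).filter fun i =>
            ∀ l, 1 ≤ l → l ≤ m → l ≠ j →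
              |x i - x ((⌊v j * ((n : ℝ) - 1)⌋).toNat + 1)| <
                |x i - x ((⌊v l * ((n : ℝ) - 1)⌋).toNat + 1)|).card
          ≤ (Finset.Icc ((⌊v (j-1) * ((n:ℝ) - 1)⌋).toNat + 2)
              ((⌊v (j+1) * ((n:ℝ) - 1)⌋).toNat)).card := by
      apply Finset.card_le_card
      intro i hi
      simp only [Finset.mem_filter, Finset.mem_Icc] at hi ⊢
      obtain ⟨⟨hi1, hin⟩, hcl⟩ := hi
      have hlo := key_lo hj2 i hi1 hin (hcl (j-1) (by omega) (by omega) (by omega))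
      have hhi := key_hi hjltm i hi1 hin (hcl (j+1) (by omega) (by omega) (by omega))
      omega
    rw [Nat.card_Icc] at hcard
    have hb0 := hfl0 (j-1) (by omega) (by omega)
    have hc0 := hfl0 (j+1) (by omega) (by omega)
    have hkey : ⌊v (j+1) * ((n:ℝ) - 1)⌋ - ⌊v (j-1) * ((n:ℝ) - 1)⌋ - 1
        ≤ ⌊q (π j) * ((n:ℝ) - 1)⌋ := by
      rw [Int.le_floor]
      have h1 : (v (j+1) - v (j-1)) * ((n:ℝ) - 1) ≤ q (π j) * ((n:ℝ) - 1) := by nlinarith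
      have h2 : v (j-1) * ((n:ℝ) - 1) < (⌊v (j-1) * ((n:ℝ) - 1)⌋ : ℝ) + 1 :=
        Int.lt_floor_add_one _
      have h3 : (⌊v (j+1) * ((n:ℝ) - 1)⌋ : ℝ) ≤ v (j+1) * ((n:ℝ) - 1) :=
        Int.floor_le _
      push_cast
      nlinarith
    omega
end

section
/- Let μ be an absolutely continuous probability measure on ℝ with finite first moment, density ρ_μ, and CDF F_μ. For y_1 < y_2 define W(y_1, y_2) = ∫_{−∞}^{(y_1+y_2)/2} |x − y_1| dμ + ∫_{(y_1+y_2)/2}^{∞} |x − y_2| dμ. Then W is differentiable with ∂_{y_1} W(y_1,y_2) = 2F_μ(y_1) − F_μ((y_1+y_2)/2) and ∂_{y_2} W(y_1,y_2) = 2F_μ(y_2) − 1 − F_μ((y_1+y_2)/2). -/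
/-!
For `y₁ < y₂` every point is sent to the nearer facility, so
`W(y₁, y₂) = ∫ min |x - y₁| |x - y₂| dμ`, which removes the moving split point. The integrand
is `1`-Lipschitz in `y₁` and differentiable at `y₁` unless `x = y₁` or `x = (y₁ + y₂)/2`, a
`μ`-null set because `μ` has no atoms. Differentiating under the integral sign gives
`∂_{y₁} W = ∫_{x closer to y₁} sign (y₁ - x) dμ = μ(x < y₁) - μ(y₁ < x < (y₁ + y₂)/2)`,
and symmetrically in `y₂`.
-/

open MeasureTheory ProbabilityTheory Set

/-- The transport cost from `μ` to the two-point configuration `(y₁, y₂)` with mass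
split at the midpoint `(y₁ + y₂)/2`. -/
noncomputable def twoFacilityCost (μ : Measure ℝ) (y₁ y₂ : ℝ) : ℝ :=
  (∫ x in Iic ((y₁ + y₂) / 2), |x - y₁| ∂μ) + ∫ x in Ioi ((y₁ + y₂) / 2), |x - y₂| ∂μ

open Filter

lemma abs_sub_le_abs_sub_iff {x a b : ℝ} (hab : a < b) :
    |x - a| ≤ |x - b| ↔ x ≤ (a + b) / 2 := by
  rw [← sq_le_sq]
  constructor <;> intro h <;> nlinarith

lemma abs_sub_lt_abs_sub_iff {x a b : ℝ} (hab : a < b) :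
    |x - a| < |x - b| ↔ x < (a + b) / 2 := by
  rw [← sq_lt_sq]
  constructor <;> intro h <;> nlinarith

lemma sign_sub_eq_indicator_sub_indicator (a x : ℝ) :
    (SignType.sign (a - x) : ℝ) = (Iio a).indicator 1 x - (Ioi a).indicator 1 x := by
  rcases lt_trichotomy x a with h | rfl | h
  · simp [h, h.not_gt, sign_pos (sub_pos.2 h)]
  · simp
  · simp [h, h.not_gt, sign_neg (sub_neg.2 h)]

lemma measurable_sign_sub (a : ℝ) : Measurable fun x : ℝ => (SignType.sign (a - x) : ℝ) := by
  simp_rw [sign_sub_eq_indicator_sub_indicator]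
  exact (measurable_const.indicator measurableSet_Iio).sub
    (measurable_const.indicator measurableSet_Ioi)

lemma lipschitzWith_min_abs_sub (x c : ℝ) : LipschitzWith 1 fun t => min |x - t| c :=
  .of_dist_le_mul fun s t => by
    calc dist (min |x - s| c) (min |x - t| c)
        ≤ max |(|x - s| - |x - t|)| |c - c| := abs_min_sub_min_le_max _ _ _ _
      _ = |(|x - s| - |x - t|)| := by simp
      _ ≤ |(x - s) - (x - t)| := abs_abs_sub_abs_le_abs_sub _ _
      _ = 1 * dist s t := by rw [sub_sub_sub_cancel_left, Real.dist_eq, abs_sub_comm, one_mul]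

lemma hasDerivAt_min_abs_sub {x a c : ℝ} (hxa : x ≠ a) (hc : |x - a| ≠ c) :
    HasDerivAt (fun t => min |x - t| c)
      (if |x - a| < c then (SignType.sign (a - x) : ℝ) else 0) a := by
  have hcont : Continuous fun t => |x - t| := by fun_prop
  split_ifs with h
  · have habs : HasDerivAt (fun t => |x - t|) (SignType.sign (a - x) : ℝ) a := by
      simp_rw [abs_sub_comm x]
      simpa [Function.comp_def] using
        (hasDerivAt_abs (sub_ne_zero.2 hxa.symm)).comp a ((hasDerivAt_id a).sub_const x)
    refine habs.congr_of_eventuallyEq ?_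
    filter_upwards [hcont.continuousAt.eventually_lt continuousAt_const h] with t ht
    exact min_eq_left ht.le
  · refine (hasDerivAt_const a c).congr_of_eventuallyEq ?_
    filter_upwards [continuousAt_const.eventually_lt hcont.continuousAt
      (lt_of_le_of_ne (not_lt.1 h) (Ne.symm hc))] with t ht
    exact min_eq_right ht.le

section FirstMoment

variable {μ : Measure ℝ} [IsFiniteMeasure μ]

lemma integrable_min_abs_sub (hμ : Integrable (fun x => x) μ) (a b : ℝ) :
    Integrable (fun x => min |x - a| |x - b|) μ :=
  (hμ.sub (integrable_const a)).abs.inf (hμ.sub (integrable_const b)).abs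

lemma twoFacilityCost_eq_integral_min (hμ : Integrable (fun x => x) μ) {y₁ y₂ : ℝ}
    (h : y₁ < y₂) : twoFacilityCost μ y₁ y₂ = ∫ x, min |x - y₁| |x - y₂| ∂μ := by
  rw [← integral_add_compl measurableSet_Iic (integrable_min_abs_sub hμ y₁ y₂), compl_Iic,
    twoFacilityCost]
  congr 1
  · refine setIntegral_congr_fun measurableSet_Iic fun x hx => ?_
    exact (min_eq_left ((abs_sub_le_abs_sub_iff h).2 hx)).symm
  · refine setIntegral_congr_fun measurableSet_Ioi fun x hx => ?_
    exact (min_eq_right (not_le.1 (mt (abs_sub_le_abs_sub_iff h).1 hx.not_ge)).le).symm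

lemma hasDerivAt_integral_min_abs_sub [NullSingletonClass μ] (hμ : Integrable (fun x => x) μ)
    {a b : ℝ} (hab : a ≠ b) :
    HasDerivAt (fun t => ∫ x, min |x - t| |x - b| ∂μ)
      (∫ x in {x | |x - a| < |x - b|}, (SignType.sign (a - x) : ℝ) ∂μ) a := by
  have hS : MeasurableSet {x : ℝ | |x - a| < |x - b|} :=
    measurableSet_lt (by fun_prop) (by fun_prop)
  have hdiff : ∀ᵐ x ∂μ, HasDerivAt (fun t => min |x - t| |x - b|)
      (if |x - a| < |x - b| then (SignType.sign (a - x) : ℝ) else 0) a := by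
    filter_upwards [Measure.ae_ne μ a, Measure.ae_ne μ ((a + b) / 2)] with x hxa hxm
    refine hasDerivAt_min_abs_sub hxa fun h => hxm ?_
    rcases abs_eq_abs.1 h with h | h
    · exact absurd (by linarith) hab
    · linarith
  rw [← integral_indicator hS]
  exact (hasDerivAt_integral_of_dominated_loc_of_lip (bound := fun _ => (1 : ℝ))
    univ_mem (.of_forall fun t => by fun_prop) (integrable_min_abs_sub hμ a b)
    ((measurable_sign_sub a).ite hS measurable_const).aestronglyMeasurable
    (.of_forall fun x => by simpa using lipschitzWith_min_abs_sub x |x - b|)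
    (integrable_const 1) hdiff).2

lemma setIntegral_sign_sub (s : Set ℝ) (a : ℝ) :
    ∫ x in s, (SignType.sign (a - x) : ℝ) ∂μ = μ.real (s ∩ Iio a) - μ.real (s ∩ Ioi a) := by
  simp_rw [sign_sub_eq_indicator_sub_indicator]
  rw [integral_sub ((integrable_const 1).indicator measurableSet_Iio)
      ((integrable_const 1).indicator measurableSet_Ioi),
    integral_indicator_one measurableSet_Iio, integral_indicator_one measurableSet_Ioi,
    measureReal_restrict_apply measurableSet_Iio, measureReal_restrict_apply measurableSet_Ioi,
    inter_comm, inter_comm (Ioi a)]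

end FirstMoment

section CDF

variable {μ : Measure ℝ} [IsProbabilityMeasure μ]

lemma measureReal_Iio_eq_cdf [NullSingletonClass μ] (a : ℝ) : μ.real (Iio a) = cdf μ a := by
  rw [cdf_eq_real, measureReal_congr Iio_ae_eq_Iic]

lemma measureReal_Ioi_eq_one_sub_cdf (a : ℝ) : μ.real (Ioi a) = 1 - cdf μ a := by
  rw [cdf_eq_real, ← compl_Iic, probReal_compl_eq_one_sub measurableSet_Iic]

lemma measureReal_Ioo_eq_cdf_sub [NullSingletonClass μ] {a b : ℝ} (h : a ≤ b) :
    μ.real (Ioo a b) = cdf μ b - cdf μ a := by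
  have hIoc := (cdf μ).measure_Ioc a b
  rw [measure_cdf] at hIoc
  rw [measureReal_congr Ioo_ae_eq_Ioc, measureReal_def, hIoc,
    ENNReal.toReal_ofReal (sub_nonneg.2 (monotone_cdf μ h))]

variable [NullSingletonClass μ]

lemma integral_sign_sub_closer_of_lt {a b : ℝ} (hab : a < b) :
    ∫ x in {x | |x - a| < |x - b|}, (SignType.sign (a - x) : ℝ) ∂μ
      = 2 * cdf μ a - cdf μ ((a + b) / 2) := by
  have hm : a ≤ (a + b) / 2 := by linarith
  have hS : {x : ℝ | |x - a| < |x - b|} = Iio ((a + b) / 2) := by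
    ext x
    exact abs_sub_lt_abs_sub_iff hab
  rw [hS, setIntegral_sign_sub, Iio_inter_Iio, min_eq_right hm, inter_comm, Ioi_inter_Iio,
    measureReal_Iio_eq_cdf, measureReal_Ioo_eq_cdf_sub hm]
  ring

lemma integral_sign_sub_closer_of_gt {a b : ℝ} (hba : b < a) :
    ∫ x in {x | |x - a| < |x - b|}, (SignType.sign (a - x) : ℝ) ∂μ
      = 2 * cdf μ a - 1 - cdf μ ((b + a) / 2) := by
  have hm : (b + a) / 2 ≤ a := by linarith
  have hS : {x : ℝ | |x - a| < |x - b|} = Ioi ((b + a) / 2) := by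
    ext x
    simpa using (abs_sub_le_abs_sub_iff (x := x) hba).not
  rw [hS, setIntegral_sign_sub, Ioi_inter_Ioi, max_eq_right hm, Ioi_inter_Iio,
    measureReal_Ioi_eq_one_sub_cdf, measureReal_Ioo_eq_cdf_sub hm]
  ring

end CDF

theorem partial_derivs_twoFacilityCost_general (μ : Measure ℝ) [IsProbabilityMeasure μ]
    (ρ : ℝ → ℝ)
    (hρ : μ = volume.withDensity fun x => ENNReal.ofReal (ρ x))
    (hint : Integrable (fun x => |x|) μ) :
    ∀ y₁ y₂ : ℝ, y₁ < y₂ →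
      HasDerivAt (fun t => twoFacilityCost μ t y₂)
          (2 * cdf μ y₁ - cdf μ ((y₁ + y₂) / 2)) y₁ ∧
        HasDerivAt (fun t => twoFacilityCost μ y₁ t)
          (2 * cdf μ y₂ - 1 - cdf μ ((y₁ + y₂) / 2)) y₂ := by
  intro y₁ y₂ hy
  have : NullSingletonClass μ := hρ ▸ inferInstance
  have hμ : Integrable (fun x => x) μ := (integrable_norm_iff aestronglyMeasurable_id).1 hint
  constructor
  · have hd := hasDerivAt_integral_min_abs_sub hμ hy.ne
    rw [integral_sign_sub_closer_of_lt hy] at hd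
    refine hd.congr_of_eventuallyEq ?_
    filter_upwards [eventually_lt_nhds hy] with t ht
    exact twoFacilityCost_eq_integral_min hμ ht
  · have hd := hasDerivAt_integral_min_abs_sub hμ hy.ne'
    rw [integral_sign_sub_closer_of_gt hy] at hd
    refine hd.congr_of_eventuallyEq ?_
    filter_upwards [eventually_gt_nhds hy] with t ht
    simp_rw [twoFacilityCost_eq_integral_min hμ ht, min_comm]

/-- for an absolutely continuous probability measure `μ` with finite
first moment (density `ρ`), the two-facility cost `W` is differentiable in each
variable, with `∂_{y₁} W = 2 F_μ(y₁) - F_μ((y₁+y₂)/2)` and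
`∂_{y₂} W = 2 F_μ(y₂) - 1 - F_μ((y₁+y₂)/2)`. -/
theorem partial_derivs_twoFacilityCost (μ : Measure ℝ) [IsProbabilityMeasure μ]
    (ρ : ℝ → ℝ) (hρnn : ∀ x, 0 ≤ ρ x)
    (hρ : μ = volume.withDensity fun x => ENNReal.ofReal (ρ x))
    (hsupp : (Function.support ρ).OrdConnected)
    (hpos : ∀ x ∈ interior (Function.support ρ), 0 < ρ x)
    (hint : Integrable (fun x => |x|) μ) :
    ∀ y₁ y₂ : ℝ, y₁ < y₂ →
      HasDerivAt (fun t => twoFacilityCost μ t y₂)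
          (2 * cdf μ y₁ - cdf μ ((y₁ + y₂) / 2)) y₁ ∧
        HasDerivAt (fun t => twoFacilityCost μ y₁ t)
          (2 * cdf μ y₂ - 1 - cdf μ ((y₁ + y₂) / 2)) y₂ :=
  partial_derivs_twoFacilityCost_general μ ρ hρ hint
end

section
/- Let μ be a probability measure with support [a,b] and CDF F_μ, and q = (q_1, q_2) with q_1 + q_2 ≥ 1 and q_1, q_2 ∈ (0,1). For a split point z ∈ [a,b], putting one facility at (a+z)/2 serving [a,z] and the other at (z+b)/2 serving (z,b] yields maximum cost max{(z−a)/2, (b−z)/2}. Among all z respecting the capacity constraint F_μ(z) ≤ q_{π(1)} and 1 − F_μ(z) ≤ q_{π(2)} for either assignment π of the two capacities, the optimal z is the projection of (a+b)/2 onto the feasible interval [F_μ^{−1}(1−q_{π(2)}), F_μ^{−1}(q_{π(1)})] achieving the smaller distance to (a+b)/2 over the two choices of π, and the resulting cost max{(z−a)/2, (b−z)/2} is minimal. -/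
open Set

lemma sup_abs_icc (u v c : ℝ) (huv : u ≤ v) (hc : c = (u + v) / 2) :
    sSup ((fun x => |x - c|) '' Icc u v) = (v - u) / 2 := by
  apply IsGreatest.csSup_eq
  constructor
  · refine ⟨u, ⟨le_refl u, huv⟩, ?_⟩
    simp only
    rw [hc, abs_of_nonpos (by linarith)]; ring
  · rintro y ⟨x, ⟨hx1, hx2⟩, rfl⟩
    rw [hc, abs_le]
    constructor <;> linarith

lemma cost_formula (a b z : ℝ) :
    max ((z - a) / 2) ((b - z) / 2) = (b - a) / 4 + |z - (a + b) / 2| / 2 := by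
  rcases le_total z ((a + b) / 2) with h | h
  · rw [abs_of_nonpos (by linarith), max_eq_right (by linarith)]; ring
  · rw [abs_of_nonneg (by linarith), max_eq_left (by linarith)]; ring

/-- for a population with support `[a,b]` and CDF `F`, splitting at `z`
and placing facilities at the midpoints `(a+z)/2`, `(z+b)/2` yields maximum cost
`max((z-a)/2, (b-z)/2)`; among all capacity-feasible split points (for either
assignment of the two capacities) any point closest to `(a+b)/2` exists and minimizes
the maximum cost. -/
theorem optimal_split_maximum_cost (μ : MeasureTheory.Measure ℝ)
    [MeasureTheory.IsProbabilityMeasure μ] (a b : ℝ) (hab : a < b)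
    (F : ℝ → ℝ) (hF : ∀ x, F x = (μ (Iic x)).toReal)
    (hFa : F a = 0) (hFb : F b = 1) (hFcont : Continuous F) (hFmono : Monotone F)
    (hFstrict : StrictMonoOn F (Icc a b))
    (q₁ q₂ : ℝ) (hq₁ : 0 < q₁ ∧ q₁ < 1) (hq₂ : 0 < q₂ ∧ q₂ < 1) (hsum : 1 ≤ q₁ + q₂) :
    let cost : ℝ → ℝ := fun z => max ((z - a) / 2) ((b - z) / 2)
    let K : Set ℝ := {z | z ∈ Icc a b ∧
      ((F z ≤ q₁ ∧ 1 - F z ≤ q₂) ∨ (F z ≤ q₂ ∧ 1 - F z ≤ q₁))}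
    (∀ z ∈ Icc a b,
        sSup ((fun x => |x - (a + z) / 2|) '' Icc a z) = (z - a) / 2 ∧
        sSup ((fun x => |x - (z + b) / 2|) '' Icc z b) = (b - z) / 2) ∧
      (∃ zstar ∈ K, ∀ z ∈ K, |zstar - (a + b) / 2| ≤ |z - (a + b) / 2|) ∧
      (∀ zstar ∈ K, (∀ z ∈ K, |zstar - (a + b) / 2| ≤ |z - (a + b) / 2|) →
        ∀ z ∈ K, cost zstar ≤ cost z) := by
  intro cost K
  refine ⟨fun z hz => ⟨sup_abs_icc a z _ hz.1 rfl, sup_abs_icc z b _ hz.2 rfl⟩, ?_, ?_⟩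
  · -- existence of minimizer
    have hKne : K.Nonempty := by
      obtain ⟨z, hz, hFz⟩ := intermediate_value_Icc hab.le hFcont.continuousOn
        (show q₁ ∈ Icc (F a) (F b) by rw [hFa, hFb]; exact ⟨hq₁.1.le, hq₁.2.le⟩)
      exact ⟨z, hz, Or.inl ⟨hFz.le, by rw [hFz]; linarith⟩⟩
    have hKclosed : IsClosed K := by
      have : K = Icc a b ∩ (({z | F z ≤ q₁} ∩ {z | 1 - F z ≤ q₂}) ∪
          ({z | F z ≤ q₂} ∩ {z | 1 - F z ≤ q₁})) := by
        ext z
        simp only [K, mem_setOf_eq, mem_inter_iff, mem_union, mem_Icc]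
      rw [this]
      exact isClosed_Icc.inter (((isClosed_le hFcont continuous_const).inter
        (isClosed_le (by fun_prop) continuous_const)).union
        ((isClosed_le hFcont continuous_const).inter
        (isClosed_le (by fun_prop) continuous_const)))
    have hKcomp : IsCompact K :=
      isCompact_Icc.of_isClosed_subset hKclosed (fun z hz => hz.1)
    obtain ⟨zs, hzs, hmin⟩ := hKcomp.exists_isMinOn hKne
      (Continuous.continuousOn (by fun_prop : Continuous fun z => |z - (a + b) / 2|))
    exact ⟨zs, hzs, fun z hz => hmin hz⟩
  · intro zstar hzs hopt z hz
    simp only [cost, cost_formula a b]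
    have := hopt z hz
    linarith
end
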